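/- Let n be a natural number and let X, Y be n×n complex matrices. Then ‖|X*| − |Y*|‖₂² + ‖|X| − |Y|‖₂² ≤ 2‖X − Y‖₂². -/

import Mathlib

open Matrix
open scoped ComplexOrder

/-- Hilbert–Schmidt (Frobenius) norm: ‖X‖₂ = √(Re Tr(XᴴX)). -/
noncomputable def hsNorm {n : ℕ} (X : Matrix (Fin n) (Fin n) ℂ) : ℝ :=
  Real.sqrt ((Matrix.trace (Xᴴ * X)).re)

/-- Angle Θ(X,Y) = arccos(Re Tr(YᴴX) / (‖X‖₂‖Y‖₂)). -/
noncomputable def theta {n : ℕ} (X Y : Matrix (Fin n) (Fin n) ℂ) : ℝ :=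
  Real.arccos ((Matrix.trace (Yᴴ * X)).re / (hsNorm X * hsNorm Y))

/-- |X| : the positive semidefinite square root of XᴴX. -/
noncomputable def matAbs {n : ℕ} (X : Matrix (Fin n) (Fin n) ℂ) : Matrix (Fin n) (Fin n) ℂ :=
  ((Matrix.posSemidef_conjTranspose_mul_self X).1.eigenvectorUnitary : Matrix (Fin n) (Fin n) ℂ) *
    Matrix.diagonal ((↑) ∘ Real.sqrt ∘ (Matrix.posSemidef_conjTranspose_mul_self X).1.eigenvalues) *
    (star ((Matrix.posSemidef_conjTranspose_mul_self X).1.eigenvectorUnitary : Matrix (Fin n) (Fin n) ℂ))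

/-!
The Hermitian dilation `D(X) = [[0, X], [Xᴴ, 0]]` satisfies `|D(X)| = diag(|Xᴴ|, |X|)` and
`‖D(X)‖₂² = 2‖X‖₂²`, so the theorem is the self-adjoint inequality `‖|A| - |B|‖₂ ≤ ‖A - B‖₂`
applied to `A = D(X)`, `B = D(Y)`. Since `|A|² = A²`, that inequality says
`Re Tr(AB) ≤ Re Tr(|A||B|)`, which holds because `|A||B| - AB = 2(A⁺B⁻ + A⁻B⁺)` and the trace of
a product of two positive semidefinite matrices is nonnegative.
-/

open scoped MatrixOrder

namespace Matrix

section Blocks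

variable {α : Type*} {l m n o : Type*}

lemma fromBlocks_sub [Sub α] (A : Matrix n l α) (B : Matrix n m α) (C : Matrix o l α)
    (D : Matrix o m α) (A' : Matrix n l α) (B' : Matrix n m α) (C' : Matrix o l α)
    (D' : Matrix o m α) :
    fromBlocks A B C D - fromBlocks A' B' C' D' =
      fromBlocks (A - A') (B - B') (C - C') (D - D') := by
  ext (_ | _) (_ | _) <;> rfl

variable [Fintype m] [Fintype n]

lemma trace_fromBlocks [AddCommMonoid α] (A : Matrix m m α) (B : Matrix m n α)
    (C : Matrix n m α) (D : Matrix n n α) :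
    (fromBlocks A B C D).trace = A.trace + D.trace := by
  simp [trace, Fintype.sum_sum_type]

lemma trace_conjTranspose_mul_self_fromBlocks [NonUnitalNonAssocSemiring α] [StarRing α]
    (A : Matrix m m α) (B : Matrix m n α) (C : Matrix n m α) (D : Matrix n n α) :
    ((fromBlocks A B C D)ᴴ * fromBlocks A B C D).trace =
      (Aᴴ * A).trace + (Bᴴ * B).trace + (Cᴴ * C).trace + (Dᴴ * D).trace := by
  rw [fromBlocks_conjTranspose, fromBlocks_multiply, trace_fromBlocks, trace_add, trace_add]
  abel

end Blocks

section Dilation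

variable {α : Type*} {n : Type*}

def hermitianDilation [Zero α] [Star α] (X : Matrix n n α) : Matrix (n ⊕ n) (n ⊕ n) α :=
  fromBlocks 0 X Xᴴ 0

lemma isSelfAdjoint_hermitianDilation [AddMonoid α] [StarAddMonoid α] (X : Matrix n n α) :
    IsSelfAdjoint (hermitianDilation X) :=
  IsHermitian.fromBlocks isHermitian_zero rfl isHermitian_zero

lemma hermitianDilation_sub [AddGroup α] [StarAddMonoid α] (X Y : Matrix n n α) :
    hermitianDilation (X - Y) = hermitianDilation X - hermitianDilation Y := by
  rw [hermitianDilation, hermitianDilation, hermitianDilation, fromBlocks_sub, conjTranspose_sub,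
    sub_zero]

lemma trace_conjTranspose_mul_self_hermitianDilation [Fintype n] [CommSemiring α] [StarRing α]
    (X : Matrix n n α) :
    ((hermitianDilation X)ᴴ * hermitianDilation X).trace = 2 * (Xᴴ * X).trace := by
  rw [hermitianDilation, trace_conjTranspose_mul_self_fromBlocks, conjTranspose_conjTranspose,
    trace_mul_comm X Xᴴ]
  simp [two_mul]

end Dilation

section Abs

variable {𝕜 : Type*} [RCLike 𝕜] {m n : Type*} [Fintype m] [Fintype n] [DecidableEq m]
  [DecidableEq n]

lemma re_trace_mul_nonneg {A B : Matrix n n 𝕜} (hA : 0 ≤ A) (hB : 0 ≤ B) :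
    0 ≤ RCLike.re (A * B).trace := by
  have hS : 0 ≤ CFC.sqrt A * B * CFC.sqrt A :=
    (CFC.sqrt_nonneg A).isSelfAdjoint.conjugate_nonneg hB
  rw [← CFC.sqrt_mul_sqrt_self A, Matrix.mul_assoc, trace_mul_comm]
  exact (RCLike.nonneg_iff.mp hS.posSemidef.trace_nonneg).1

lemma re_trace_mul_le_re_trace_cfcAbs_mul_cfcAbs {A B : Matrix n n 𝕜} (hA : IsSelfAdjoint A)
    (hB : IsSelfAdjoint B) :
    RCLike.re (A * B).trace ≤ RCLike.re (CFC.abs A * CFC.abs B).trace := by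
  rw [← CFC.posPart_add_negPart A, ← CFC.posPart_add_negPart B]
  conv_lhs => rw [← CFC.posPart_sub_negPart A, ← CFC.posPart_sub_negPart B]
  have h₁ := re_trace_mul_nonneg (CFC.posPart_nonneg A) (CFC.negPart_nonneg B)
  have h₂ := re_trace_mul_nonneg (CFC.negPart_nonneg A) (CFC.posPart_nonneg B)
  simp only [add_mul, mul_add, sub_mul, mul_sub, trace_add, trace_sub, map_add, map_sub]
  linarith

lemma re_trace_conjTranspose_mul_self_cfcAbs_sub_cfcAbs_le {A B : Matrix n n 𝕜}
    (hA : IsSelfAdjoint A) (hB : IsSelfAdjoint B) :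
    RCLike.re ((CFC.abs A - CFC.abs B)ᴴ * (CFC.abs A - CFC.abs B)).trace ≤
      RCLike.re ((A - B)ᴴ * (A - B)).trace := by
  have key := re_trace_mul_le_re_trace_cfcAbs_mul_cfcAbs hA hB
  have hAA : CFC.abs A * CFC.abs A = A * A := by rw [CFC.abs_mul_abs, hA.star_eq]
  have hBB : CFC.abs B * CFC.abs B = B * B := by rw [CFC.abs_mul_abs, hB.star_eq]
  rw [← star_eq_conjTranspose, ← star_eq_conjTranspose, star_sub, star_sub,
    (CFC.abs_nonneg A).star_eq, (CFC.abs_nonneg B).star_eq, hA.star_eq, hB.star_eq]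
  simp only [sub_mul, mul_sub, trace_sub, map_sub, hAA, hBB, trace_mul_comm (CFC.abs B),
    trace_mul_comm B A]
  linarith

lemma fromBlocks_zero_zero_nonneg {A : Matrix m m 𝕜} {D : Matrix n n 𝕜} (hA : 0 ≤ A)
    (hD : 0 ≤ D) : 0 ≤ fromBlocks A 0 0 D := by
  have h : fromBlocks A 0 0 D = star (fromBlocks (CFC.sqrt A) 0 0 (CFC.sqrt D)) *
      fromBlocks (CFC.sqrt A) 0 0 (CFC.sqrt D) := by
    rw [star_eq_conjTranspose, fromBlocks_conjTranspose, fromBlocks_multiply,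
      ← star_eq_conjTranspose, ← star_eq_conjTranspose, (CFC.sqrt_nonneg A).star_eq,
      (CFC.sqrt_nonneg D).star_eq, CFC.sqrt_mul_sqrt_self A, CFC.sqrt_mul_sqrt_self D]
    simp
  rw [h]
  exact star_mul_self_nonneg _

lemma cfcAbs_hermitianDilation (X : Matrix n n 𝕜) :
    CFC.abs (hermitianDilation X) = fromBlocks (CFC.abs Xᴴ) 0 0 (CFC.abs X) := by
  have h₀ : 0 ≤ fromBlocks (CFC.abs Xᴴ) 0 0 (CFC.abs X) :=
    fromBlocks_zero_zero_nonneg (CFC.abs_nonneg _) (CFC.abs_nonneg _)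
  refine CFC.sqrt_unique ?_ h₀
  simp [hermitianDilation, fromBlocks_multiply, CFC.abs_mul_abs, star_eq_conjTranspose,
    fromBlocks_conjTranspose]

end Abs

end Matrix

lemma matAbs_eq_cfcAbs {n : ℕ} (X : Matrix (Fin n) (Fin n) ℂ) : matAbs X = CFC.abs X := by
  have hX := posSemidef_conjTranspose_mul_self X
  rw [CFC.abs, star_eq_conjTranspose, CFC.sqrt_eq_cfc, cfc_nnreal_eq_real _ _ hX.nonneg,
    hX.1.cfc_eq]
  simp only [IsHermitian.cfc, matAbs, Unitary.conjStarAlgAut_apply]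
  congr 2
  funext i j
  simp [diagonal_apply, max_eq_left (hX.eigenvalues_nonneg i)]

lemma hsNorm_sq {n : ℕ} (X : Matrix (Fin n) (Fin n) ℂ) : hsNorm X ^ 2 = (Xᴴ * X).trace.re :=
  Real.sq_sqrt (Complex.nonneg_iff.mp (posSemidef_conjTranspose_mul_self X).trace_nonneg).1

theorem stmt_13 {n : ℕ} (X Y : Matrix (Fin n) (Fin n) ℂ) :
    hsNorm (matAbs Xᴴ - matAbs Yᴴ) ^ 2 + hsNorm (matAbs X - matAbs Y) ^ 2 ≤
      2 * hsNorm (X - Y) ^ 2 := by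
  have h := re_trace_conjTranspose_mul_self_cfcAbs_sub_cfcAbs_le
    (isSelfAdjoint_hermitianDilation X) (isSelfAdjoint_hermitianDilation Y)
  rw [cfcAbs_hermitianDilation, cfcAbs_hermitianDilation, fromBlocks_sub,
    trace_conjTranspose_mul_self_fromBlocks, ← hermitianDilation_sub,
    trace_conjTranspose_mul_self_hermitianDilation] at h
  simpa [hsNorm_sq, matAbs_eq_cfcAbs] using h
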